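/- Let X be a symmetric random vector in ℝⁿ satisfying the regularity condition with constant D > 1: for every q ≥ 2 and every t ∈ ℝⁿ, (E|⟨X,t⟩|^{2q})^{1/(2q)} ≤ D·(E|⟨X,t⟩|^{q})^{1/q}. Set c₁ = 1/(4·log(4D/3)). Then for every p ≥ max{8·log(4D/3), 2·log 2} (i.e. p such that c₁·p ≥ 2 and p ≥ 2 log 2), K_p(X) ⊆ 2·B(L_{c₁·p}(X)). -/

import Mathlib

open MeasureTheory ProbabilityTheory Real Set
open scoped BigOperators ENNReal Pointwise

noncomputable section

/-- The dot product of two vectors in `ℝⁿ`. -/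
def dotp {n : ℕ} (x t : Fin n → ℝ) : ℝ := ∑ i, x i * t i

/-- The floating body `K_p(X)` of a random vector `X` defined on `(Ω, μ)`. -/
def floatingBody {Ω : Type*} [MeasurableSpace Ω] {n : ℕ}
    (μ : Measure Ω) (X : Ω → Fin n → ℝ) (p : ℝ) : Set (Fin n → ℝ) :=
  {t | μ {ω | 1 ≤ dotp (X ω) t} ≤ ENNReal.ofReal (Real.exp (-p))}

/-- The polar `T°` of a set `T ⊆ ℝⁿ`. -/
def polarSet {n : ℕ} (T : Set (Fin n → ℝ)) : Set (Fin n → ℝ) :=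
  {x | ∀ t ∈ T, dotp t x ≤ 1}

/-- `nrm` is a norm on `ℝⁿ`. -/
def IsNormOn {n : ℕ} (nrm : (Fin n → ℝ) → ℝ) : Prop :=
  (∀ x, 0 ≤ nrm x) ∧ (∀ x, nrm x = 0 ↔ x = 0) ∧
  (∀ (c : ℝ) (x), nrm (c • x) = |c| * nrm x) ∧
  (∀ x y, nrm (x + y) ≤ nrm x + nrm y)

/-- `X` is a symmetric random vector: `X` and `-X` have the same law. -/
def IsSymmetricRV {Ω : Type*} [MeasurableSpace Ω] {n : ℕ}
    (μ : Measure Ω) (X : Ω → Fin n → ℝ) : Prop :=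
  Measure.map X μ = Measure.map (fun ω => -(X ω)) μ

/-- The small-ball condition with respect to the norm `nrm`, with constants `γ, δ`. -/
def SmallBall {Ω : Type*} [MeasurableSpace Ω] {n : ℕ}
    (μ : Measure Ω) (X : Ω → Fin n → ℝ) (nrm : (Fin n → ℝ) → ℝ) (γ δ : ℝ) : Prop :=
  ∀ t, ENNReal.ofReal δ ≤ μ {ω | γ * nrm t ≤ |dotp (X ω) t|}

/-- The `L_r` condition with respect to the norm `nrm`, with constant `L`. -/
def LrCond {Ω : Type*} [MeasurableSpace Ω] {n : ℕ}
    (μ : Measure Ω) (X : Ω → Fin n → ℝ) (nrm : (Fin n → ℝ) → ℝ) (r L : ℝ) : Prop :=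
  ∀ t, Integrable (fun ω => |dotp (X ω) t| ^ r) μ ∧
    (∫ ω, |dotp (X ω) t| ^ r ∂μ) ^ (1 / r) ≤ L * nrm t

/-- `Y 1, …, Y N` are independent copies of `X`. -/
def IIDCopies {Ω : Type*} [MeasurableSpace Ω] {n N : ℕ}
    (μ : Measure Ω) (X : Ω → Fin n → ℝ) (Y : Fin N → Ω → Fin n → ℝ) : Prop :=
  (∀ i, Measurable (Y i)) ∧
  iIndepFun Y μ ∧
  (∀ i, Measure.map (Y i) μ = Measure.map X μ)

/-- The absolute convex hull of the points `Y 1, …, Y N`, i.e. the convex hull of `{±Y i}`. -/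
def absconv {n N : ℕ} (Y : Fin N → Fin n → ℝ) : Set (Fin n → ℝ) :=
  convexHull ℝ ((Set.range Y) ∪ (Set.range fun i => -(Y i)))

/-- The unit ball `B(L_p(X))` of the `L_p(X)` (quasi-)norm `t ↦ (E|⟨X,t⟩|^p)^{1/p}`. -/
def BLp {Ω : Type*} [MeasurableSpace Ω] {n : ℕ}
    (μ : Measure Ω) (X : Ω → Fin n → ℝ) (p : ℝ) : Set (Fin n → ℝ) :=
  {t | Integrable (fun ω => |dotp (X ω) t| ^ p) μ ∧
    (∫ ω, |dotp (X ω) t| ^ p ∂μ) ^ (1 / p) ≤ 1}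


lemma dotp_neg_left {n : ℕ} (x t : Fin n → ℝ) : dotp (-x) t = -dotp x t := by
  simp [dotp, neg_mul, Finset.sum_neg_distrib]

lemma dotp_smul_right {n : ℕ} (c : ℝ) (x t : Fin n → ℝ) :
    dotp x (c • t) = c * dotp x t := by
  simp [dotp, Finset.mul_sum, mul_left_comm]

lemma measurable_dotp_right {n : ℕ} (t : Fin n → ℝ) :
    Measurable fun x : Fin n → ℝ => dotp x t := by
  unfold dotp
  exact Finset.measurable_sum _ fun i _ => (measurable_pi_apply i).mul_const _

/-- Lemma `lemma:L-p-2`: if a symmetric random vector `X` satisfies the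
regularity condition `‖⟨X,t⟩‖_{2q} ≤ D ‖⟨X,t⟩‖_q` for all `q ≥ 2`, then for every
`p ≥ max{8 log(4D/3), 2 log 2}` one has `K_p(X) ⊆ 2 B(L_{c₁ p}(X))` with
`c₁ = 1/(4 log(4D/3))`. -/
theorem stmt13 {Ω : Type*} [MeasurableSpace Ω] {n : ℕ}
    (μ : Measure Ω) [IsProbabilityMeasure μ] (X : Ω → Fin n → ℝ)
    (hX : Measurable X) (hsym : IsSymmetricRV μ X)
    (D : ℝ) (hD : 1 < D)
    (hreg : ∀ q : ℝ, 2 ≤ q → ∀ t : Fin n → ℝ,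
      Integrable (fun ω => |dotp (X ω) t| ^ (2 * q)) μ ∧
      (∫ ω, |dotp (X ω) t| ^ (2 * q) ∂μ) ^ (1 / (2 * q)) ≤
        D * (∫ ω, |dotp (X ω) t| ^ q ∂μ) ^ (1 / q))
    (p : ℝ) (hp : max (8 * Real.log (4 * D / 3)) (2 * Real.log 2) ≤ p) :
    floatingBody μ X p ⊆ (2 : ℝ) • BLp μ X (p / (4 * Real.log (4 * D / 3))) := by
  intro t ht
  simp only [floatingBody, Set.mem_setOf_eq] at ht
  set L := Real.log (4 * D / 3) with hLdef
  have hL : 0 < L := Real.log_pos (by linarith)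
  set r := p / (4 * L) with hrdef
  have hp1 : 8 * L ≤ p := le_trans (le_max_left _ _) hp
  have hp2 : 2 * Real.log 2 ≤ p := le_trans (le_max_right _ _) hp
  have hppos : 0 < p := lt_of_lt_of_le (by positivity) hp1
  have hr2 : (2:ℝ) ≤ r := by rw [hrdef, le_div_iff₀ (by positivity)]; linarith
  have hrpos : 0 < r := by linarith
  have hrL : 2 * r * L = p / 2 := by field_simp [hrdef]; rw [hrdef]; field_simp; norm_num
  clear_value L r
  -- the random variable Z = ⟨X, t⟩
  set Z : Ω → ℝ := fun ω => dotp (X ω) t with hZdef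
  have hZm : Measurable Z := (measurable_dotp_right t).comp hX
  have hmr : ∀ s : ℝ, 0 ≤ s → Measurable fun ω => |Z ω| ^ s := fun s hs =>
    (Real.continuous_rpow_const hs).measurable.comp hZm.abs
  -- integrability
  have hint2q0 : Integrable (fun ω => |Z ω| ^ (2 * max 2 r)) μ :=
    (hreg _ (le_max_left _ _) t).1
  have hint2r : Integrable (fun ω => |Z ω| ^ (2 * r)) μ := (hreg r hr2 t).1
  have hintr : Integrable (fun ω => |Z ω| ^ r) μ := by
    have hb : ∀ ω, ‖|Z ω| ^ r‖ ≤ 1 + |Z ω| ^ (2 * max 2 r) := by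
      intro ω
      rw [Real.norm_of_nonneg (Real.rpow_nonneg (abs_nonneg _) _)]
      rcases le_total (|Z ω|) 1 with h | h
      · have h1 := Real.rpow_le_one (abs_nonneg _) h hrpos.le
        have h2 : (0:ℝ) ≤ |Z ω| ^ (2 * max 2 r) := Real.rpow_nonneg (abs_nonneg _) _
        linarith
      · have hle : r ≤ 2 * max 2 r := by
          have h1 := le_max_right (2:ℝ) r
          have h2 := le_max_left (2:ℝ) r
          linarith
        have h1 : |Z ω| ^ r ≤ |Z ω| ^ (2 * max 2 r) :=
          Real.rpow_le_rpow_of_exponent_le h hle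
        linarith
    exact ((integrable_const 1).add hint2q0).mono'
      ((hmr r hrpos.le).aestronglyMeasurable) (Filter.Eventually.of_forall hb)
  -- symmetry: μ {Z ≤ -1} = μ {1 ≤ Z}
  have hmS : MeasurableSet {x : Fin n → ℝ | dotp x t ≤ -1} :=
    measurableSet_le (measurable_dotp_right t) measurable_const
  have hsymm : μ {ω | Z ω ≤ -1} = μ {ω | 1 ≤ Z ω} := by
    calc μ {ω | Z ω ≤ -1} = (Measure.map X μ) {x | dotp x t ≤ -1} := by
          rw [Measure.map_apply hX hmS]; rfl
      _ = (Measure.map (fun ω => -(X ω)) μ) {x | dotp x t ≤ -1} := by rw [hsym]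
      _ = μ {ω | dotp (-(X ω)) t ≤ -1} := by rw [Measure.map_apply (f := fun ω => -(X ω)) hX.neg hmS]; rfl
      _ = μ {ω | 1 ≤ Z ω} := by
          congr 1; ext ω; simp [dotp_neg_left, hZdef, neg_le]
  -- abbreviations
  set A := ∫ ω, |Z ω| ^ r ∂μ with hAdef
  set B := ∫ ω, |Z ω| ^ (2 * r) ∂μ with hBdef
  have hA0 : 0 ≤ A := integral_nonneg fun ω => Real.rpow_nonneg (abs_nonneg _) _
  have hB0 : 0 ≤ B := integral_nonneg fun ω => Real.rpow_nonneg (abs_nonneg _) _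
  have hmom : B ^ (1/(2*r)) ≤ D * A ^ (1/r) := (hreg r hr2 t).2
  have ht' : μ {ω | 1 ≤ Z ω} ≤ ENNReal.ofReal (Real.exp (-p)) := ht
  have hdot : ∀ ω, |dotp (X ω) ((2:ℝ)⁻¹ • t)| ^ r = (2:ℝ)⁻¹ ^ r * |Z ω| ^ r := by
    intro ω
    rw [dotp_smul_right, abs_mul, Real.mul_rpow (abs_nonneg _) (abs_nonneg _),
      abs_of_nonneg (by norm_num : (0:ℝ) ≤ (2:ℝ)⁻¹)]
  clear_value Z A B
  -- the key bound
  have hkey : A ≤ (2:ℝ) ^ r := by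
    by_contra hcon
    push_neg at hcon
    have h2r1 : (1:ℝ) < (2:ℝ) ^ r :=
      (Real.one_lt_rpow_iff_of_pos (by norm_num)).2 (Or.inl ⟨by norm_num, hrpos⟩)
    have hApos : 0 < A := lt_trans (by linarith) hcon
    have hDpos : (0:ℝ) < D := by linarith
    -- moment comparison : B ≤ D^(2r) * A^2
    have hBle : B ≤ D ^ (2 * r) * A ^ 2 := by
      have h1 : (B ^ (1 / (2 * r))) ^ (2 * r) ≤ (D * A ^ (1 / r)) ^ (2 * r) :=
        Real.rpow_le_rpow (Real.rpow_nonneg hB0 _) hmom (by positivity)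
      rw [← Real.rpow_mul hB0, one_div_mul_cancel (by positivity),
        Real.rpow_one, Real.mul_rpow hDpos.le (Real.rpow_nonneg hApos.le _),
        ← Real.rpow_mul hApos.le,
        show 1 / r * (2 * r) = ((2:ℕ):ℝ) by push_cast; field_simp,
        Real.rpow_natCast] at h1
      exact h1
    -- the exceptional set
    set c := A * (2:ℝ) ^ (-r) with hcdef
    clear_value c
    have h2negr : (0:ℝ) < (2:ℝ) ^ (-r) := Real.rpow_pos_of_pos (by norm_num) _
    have h2id : (2:ℝ) ^ r * (2:ℝ) ^ (-r) = 1 := by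
      rw [← Real.rpow_add (by norm_num)]; simp
    have hc1 : 1 < c := by
      rw [hcdef, ← h2id]
      exact (mul_lt_mul_iff_of_pos_right h2negr).mpr hcon
    have hc0 : (0:ℝ) < c := by linarith
    have hu4 : (2:ℝ) ^ (-r) ≤ 1/4 := by
      calc (2:ℝ) ^ (-r) ≤ (2:ℝ) ^ (-2:ℝ) :=
            Real.rpow_le_rpow_of_exponent_le (by norm_num) (by linarith)
        _ = 1/4 := by
            rw [show (-2:ℝ) = ((-2:ℤ):ℝ) by norm_num, Real.rpow_intCast]
            norm_num
    have hAc : 0 < A - c := by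
      have h1 : c ≤ A * (1/4) := by
        rw [hcdef]; exact mul_le_mul_of_nonneg_left hu4 hApos.le
      linarith
    -- the exceptional set E
    set E := {ω | c ≤ |Z ω| ^ r} with hEdef
    have hEm : MeasurableSet E := measurableSet_le measurable_const (hmr r hrpos.le)
    set m := (μ E).toReal with hmdef
    have hm0 : 0 ≤ m := hmdef ▸ ENNReal.toReal_nonneg
    clear_value m
    have hm1 : m ≤ 1 := by
      rw [hmdef]
      exact ENNReal.toReal_le_of_le_ofReal zero_le_one
        (by rw [ENNReal.ofReal_one]; exact prob_le_one)
    -- key integral inequality for each l > 0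
    have hkey2 : ∀ l : ℝ, 0 < l → A - c ≤ 1/(2*l) * B + l/2 * m := by
      intro l hl
      have amgm : ∀ x : ℝ, x ≤ x^2/(2*l) + l/2 := by
        intro x
        have h := div_nonneg (sq_nonneg (x - l)) (by positivity : (0:ℝ) ≤ 2*l)
        have he : x^2/(2*l) + l/2 - x = (x-l)^2/(2*l) := by field_simp; ring
        linarith
      have hpt : ∀ ω, |Z ω| ^ r ≤
          c + (1/(2*l) * |Z ω| ^ (2*r) + E.indicator (fun _ => l/2) ω) := by
        intro ω
        have hsq : |Z ω| ^ (2*r) = (|Z ω| ^ r)^2 := by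
          rw [← Real.rpow_natCast (|Z ω|^r) 2, ← Real.rpow_mul (abs_nonneg _)]
          congr 1
          push_cast; ring
        by_cases hω : ω ∈ E
        · rw [Set.indicator_of_mem hω, hsq]
          have h1 := amgm (|Z ω|^r)
          have h2 : 1/(2*l) * (|Z ω|^r)^2 = (|Z ω|^r)^2/(2*l) := by ring
          linarith
        · rw [Set.indicator_of_notMem hω]
          simp only [hEdef, Set.mem_setOf_eq, not_le] at hω
          have hnn : (0:ℝ) ≤ 1/(2*l) * |Z ω| ^ (2*r) := by positivity
          linarith
      have hi2 : Integrable (fun ω => 1/(2*l) * |Z ω| ^ (2*r)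
          + E.indicator (fun _ => l/2) ω) μ :=
        (hint2r.const_mul _).add ((integrable_const (l/2)).indicator hEm)
      have hi1 : Integrable (fun ω => c + (1/(2*l) * |Z ω| ^ (2*r)
          + E.indicator (fun _ => l/2) ω)) μ := (integrable_const c).add hi2
      have hmono := integral_mono hintr hi1 hpt
      rw [← hAdef] at hmono
      rw [integral_add (integrable_const c) hi2,
        integral_add (hint2r.const_mul _) ((integrable_const (l/2)).indicator hEm),
        integral_const, integral_const_mul, integral_indicator_const _ hEm] at hmono
      simp only [Measure.real, measure_univ, ENNReal.toReal_one, smul_eq_mul, one_mul] at hmono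
      rw [← hBdef] at hmono
      have hcomm : (μ E).toReal * (l/2) = l/2 * m := by rw [hmdef]; ring
      linarith [hmono, hcomm]
    -- B must be positive
    have hBpos : 0 < B := by
      by_contra hB
      push_neg at hB
      have hB' : B = 0 := le_antisymm hB hB0
      have h := hkey2 ((A - c)/2) (by linarith)
      rw [hB'] at h
      nlinarith [hm1, hm0, hAc]
    -- Cauchy–Schwarz type inequality
    have hcs : (A - c)^2 ≤ B * m := by
      have h := hkey2 (B/(A-c)) (div_pos hBpos hAc)
      have h1 : 1/(2*(B/(A-c))) * B = (A-c)/2 := by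
        field_simp
      have h2 : B/(A-c)/2 * m = B*m/(A-c)/2 := by ring
      rw [h1, h2] at h
      have h3 : A - c ≤ B*m/(A-c) := by linarith
      rw [le_div_iff₀ hAc] at h3
      rw [pow_two]
      exact h3
    -- lower bound on m
    have hD2r : 0 < D ^ (2*r) := Real.rpow_pos_of_pos hDpos _
    have h2 : ((3:ℝ)/4)^2 ≤ (1 - (2:ℝ)^(-r))^2 :=
      pow_le_pow_left₀ (by norm_num) (by linarith) 2
    have h916 : (9/16 : ℝ) ≤ D ^ (2*r) * m := by
      have e1 : (A - c)^2 = A^2*(1 - (2:ℝ)^(-r))^2 := by rw [hcdef]; ring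
      have e2 : B*m ≤ (D^(2*r)*A^2)*m := mul_le_mul_of_nonneg_right hBle hm0
      have e3 : A^2*(1-(2:ℝ)^(-r))^2 ≤ (D^(2*r)*A^2)*m := by
        rw [← e1]; exact le_trans hcs e2
      have e4 : (9/16:ℝ)*A^2 ≤ A^2*(1-(2:ℝ)^(-r))^2 := by
        have h5 := mul_le_mul_of_nonneg_left h2 (sq_nonneg A)
        calc (9/16:ℝ)*A^2 = A^2 * (((3:ℝ)/4)^2) := by ring
          _ ≤ A^2*(1-(2:ℝ)^(-r))^2 := h5
      have e5 : (9/16:ℝ)*A^2 ≤ (D^(2*r)*m)*A^2 := by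
        have e6 : (D^(2*r)*A^2)*m = (D^(2*r)*m)*A^2 := by ring
        linarith [e4, e3, e6]
      exact le_of_mul_le_mul_right e5 (pow_pos hApos 2)
    -- exponential identity
    have hexp : Real.exp (-(p/2)) * D^(2*r) = ((3:ℝ)/4)^(2*r) := by
      have h4D3 : (0:ℝ) < 4*D/3 := by linarith
      have hDsplit : (D:ℝ)^(2*r) = (4*D/3)^(2*r) * ((3:ℝ)/4)^(2*r) := by
        rw [← Real.mul_rpow (by positivity) (by norm_num)]
        congr 1
        ring
      have hE : (4*D/3:ℝ)^(2*r) = Real.exp (p/2) := by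
        rw [Real.rpow_def_of_pos h4D3]
        congr 1
        rw [← hLdef, mul_comm]
        exact hrL
      rw [hDsplit, hE, ← mul_assoc, ← Real.exp_add,
        show -(p/2) + p/2 = 0 by ring, Real.exp_zero, one_mul]
    have h34 : ((3:ℝ)/4)^(2*r) < 9/16 := by
      calc ((3:ℝ)/4)^(2*r) < ((3:ℝ)/4)^(2:ℝ) :=
            Real.rpow_lt_rpow_of_exponent_gt (by norm_num) (by norm_num) (by linarith)
        _ = 9/16 := by
            rw [show (2:ℝ) = ((2:ℕ):ℝ) by norm_num, Real.rpow_natCast]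
            norm_num
    have hlow : Real.exp (-(p/2)) < m := by
      have h5 : Real.exp (-(p/2)) * D^(2*r) < m * D^(2*r) := by
        rw [hexp]
        calc ((3:ℝ)/4)^(2*r) < 9/16 := h34
          _ ≤ D^(2*r) * m := h916
          _ = m * D^(2*r) := by ring
      exact (mul_lt_mul_iff_of_pos_right hD2r).mp h5
    -- upper bound on m
    have hEsub : E ⊆ {ω | 1 ≤ Z ω} ∪ {ω | Z ω ≤ -1} := by
      intro ω hω
      have h1 : c ≤ |Z ω| ^ r := hω
      have habs : 1 ≤ |Z ω| := by
        by_contra hab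
        push_neg at hab
        have := Real.rpow_le_one (abs_nonneg _) hab.le hrpos.le
        linarith
      rcases le_abs.mp habs with h | h
      · exact Or.inl h
      · exact Or.inr (by simp only [Set.mem_setOf_eq]; linarith)
    have hup : m ≤ Real.exp (-(p/2)) := by
      have hμE : μ E ≤ ENNReal.ofReal (Real.exp (-p) + Real.exp (-p)) := by
        calc μ E ≤ μ ({ω | 1 ≤ Z ω} ∪ {ω | Z ω ≤ -1}) := measure_mono hEsub
          _ ≤ μ {ω | 1 ≤ Z ω} + μ {ω | Z ω ≤ -1} := measure_union_le _ _
          _ = μ {ω | 1 ≤ Z ω} + μ {ω | 1 ≤ Z ω} := by rw [hsymm]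
          _ ≤ ENNReal.ofReal (Real.exp (-p)) + ENNReal.ofReal (Real.exp (-p)) :=
              add_le_add ht' ht'
          _ = ENNReal.ofReal (Real.exp (-p) + Real.exp (-p)) :=
              (ENNReal.ofReal_add (Real.exp_nonneg _) (Real.exp_nonneg _)).symm
      have h3 : (2:ℝ) ≤ Real.exp (p/2) := by
        calc (2:ℝ) = Real.exp (Real.log 2) := (Real.exp_log (by norm_num)).symm
          _ ≤ Real.exp (p/2) := Real.exp_le_exp.mpr (by linarith)
      have h4 : Real.exp (-p) * 2 ≤ Real.exp (-p) * Real.exp (p/2) :=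
        mul_le_mul_of_nonneg_left h3 (Real.exp_nonneg _)
      rw [← Real.exp_add] at h4
      have h2 : Real.exp (-p) + Real.exp (-p) ≤ Real.exp (-(p/2)) := by
        calc Real.exp (-p) + Real.exp (-p) = Real.exp (-p) * 2 := by ring
          _ ≤ Real.exp (-p + p/2) := h4
          _ = Real.exp (-(p/2)) := by ring_nf
      calc m = (μ E).toReal := hmdef
        _ ≤ Real.exp (-p) + Real.exp (-p) :=
            ENNReal.toReal_le_of_le_ofReal (by positivity) hμE
        _ ≤ Real.exp (-(p/2)) := h2
    linarith
  -- conclude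
  rw [Set.mem_smul_set_iff_inv_smul_mem₀ (by norm_num : (2:ℝ) ≠ 0)]
  simp only [BLp, Set.mem_setOf_eq]
  constructor
  · refine (hintr.const_mul ((2:ℝ)⁻¹ ^ r)).congr ?_
    filter_upwards with ω
    rw [hdot ω]
  · have h1 : (∫ ω, |dotp (X ω) ((2:ℝ)⁻¹ • t)| ^ r ∂μ) = (2:ℝ)⁻¹ ^ r * A := by
      rw [hAdef, ← integral_const_mul]
      exact integral_congr_ae (by filter_upwards with ω; rw [hdot ω])
    rw [h1, Real.mul_rpow (by positivity) hA0, ← Real.rpow_mul (by norm_num),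
      mul_one_div, div_self hrpos.ne', Real.rpow_one]
    calc (2:ℝ)⁻¹ * A ^ (1/r) ≤ (2:ℝ)⁻¹ * ((2:ℝ) ^ r) ^ (1/r) := by
          gcongr
      _ = 1 := by
          rw [← Real.rpow_mul (by norm_num), mul_one_div, div_self hrpos.ne', Real.rpow_one]
          norm_num
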